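/- Let $R$ be a $\mathbb{Z}_p$-algebra which is $p$-torsion free, let $M$ be a finite free $R$-module of rank $h$, and let $M' \subseteq M$ be an $R$-submodule with $pM \subseteq M' \subseteq M$ such that $M'/pM$ and $M/M'$ are free $R/pR$-modules of ranks $h - d$ and $d$ respectively. Suppose $F : M \to M$ is an additive map with $F(M') \subseteq pM$ and such that $M'/F(M')$ is a free $R/pR$-module of rank $h-d$. Then $F(M') = pM$. -/

import Mathlib

open Module

/-! Since `F(M') ⊆ pM`, there is a surjection `M' ⧸ F(M') → M' ⧸ pM` between isomorphic finite
modules. Over a commutative ring a surjective endomorphism of a finite module is injective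
(Orzech, Vasconcelos), so this surjection is an isomorphism and `pM ⊆ F(M')`. -/

namespace Submodule

variable {R A : Type*} [Ring R] [OrzechProperty R] [AddCommGroup A] [Module R A]

theorem eq_of_le_of_quotient_linearEquiv {N P : Submodule R A} [Module.Finite R (A ⧸ P)]
    (hle : N ≤ P) (e : (A ⧸ N) ≃ₗ[R] (A ⧸ P)) : N = P := by
  have hendo_inj : Function.Injective (factor hle ∘ₗ e.symm.toLinearMap) :=
    OrzechProperty.injective_of_surjective_endomorphism _
      ((factor_surjective hle).comp e.symm.surjective)
  have hfactor_inj : Function.Injective (factor hle) := by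
    simpa using hendo_inj.comp e.injective
  refine le_antisymm hle fun x hx => ?_
  rw [← Quotient.mk_eq_zero N]
  exact hfactor_inj (by simpa [Quotient.mk_eq_zero] using hx)

end Submodule

theorem stmt_8_general (R : Type*) [CommRing R] (p : ℕ)
    (M : Type*) [AddCommGroup M] [Module R M]
    (h d : ℕ)
    (P M' : Submodule R M)
    (hPM' : P ≤ M')
    (e₁ : (M' ⧸ (P.comap M'.subtype)) ≃ₗ[R] (Fin (h - d) → R ⧸ Ideal.span {(p : R)}))
    (F : M →+ M)
    (hF : ∀ x ∈ M', F x ∈ P)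
    (N : Submodule R M) (hN : (N : Set M) = F '' (M' : Set M))
    (e₃ : (M' ⧸ (N.comap M'.subtype)) ≃ₗ[R] (Fin (h - d) → R ⧸ Ideal.span {(p : R)})) :
    N = P := by
  have hNP : N ≤ P := by
    rw [← SetLike.coe_subset_coe, hN, Set.image_subset_iff]
    exact hF
  have : Module.Finite R (M' ⧸ P.comap M'.subtype) := Module.Finite.equiv e₁.symm
  have hcomap : N.comap M'.subtype = P.comap M'.subtype :=
    Submodule.eq_of_le_of_quotient_linearEquiv (Submodule.comap_mono hNP) (e₃.trans e₁.symm)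
  refine le_antisymm hNP fun x hx => ?_
  show (⟨x, hPM' hx⟩ : M') ∈ N.comap M'.subtype
  rwa [hcomap]

/-- key step of Frobenius untwisting. Let `R` be a
commutative ring in which `p` is a nonzerodivisor (e.g. a `p`-torsion-free
`ℤ_p`-algebra), `M` a finite free `R`-module of rank `h`, and `pM ⊆ M' ⊆ M` a
submodule such that `M'/pM` and `M/M'` are free `R/pR`-modules of ranks `h-d`
and `d`. If `F : M → M` is additive with `F(M') ⊆ pM` and `M'/F(M')` is free
of rank `h-d` over `R/pR`, then `F(M') = pM`.

Here `P` is the submodule `pM`, `N` the submodule whose underlying set is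
`F(M')`, and freeness of rank `r` over `R/pR` is expressed via an `R`-linear
isomorphism with `(R/pR)^r`. -/
theorem stmt_8 (R : Type*) [CommRing R] (p : ℕ) [Fact p.Prime]
    (hp : ∀ r : R, (p : R) * r = 0 → r = 0)
    (M : Type*) [AddCommGroup M] [Module R M]
    [Module.Free R M] [Module.Finite R M]
    (h d : ℕ) (hdh : d ≤ h) (hM : finrank R M = h)
    (P M' : Submodule R M)
    (hP : ∀ x : M, x ∈ P ↔ ∃ m : M, x = (p : R) • m)
    (hPM' : P ≤ M')
    (e₁ : (M' ⧸ (P.comap M'.subtype)) ≃ₗ[R] (Fin (h - d) → R ⧸ Ideal.span {(p : R)}))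
    (e₂ : (M ⧸ M') ≃ₗ[R] (Fin d → R ⧸ Ideal.span {(p : R)}))
    (F : M →+ M)
    (hF : ∀ x ∈ M', F x ∈ P)
    (N : Submodule R M) (hN : (N : Set M) = F '' (M' : Set M))
    (e₃ : (M' ⧸ (N.comap M'.subtype)) ≃ₗ[R] (Fin (h - d) → R ⧸ Ideal.span {(p : R)})) :
    N = P :=
  stmt_8_general R p M h d P M' hPM' e₁ F hF N hN e₃
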